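/- arXiv:2110.15914 — 2 statements merged into one kernel-verified Lean document; each statement's English description precedes it below -/
import Mathlib

section
/- Let F_X be the CDF of a real random variable X with continuous CDF, and let x ∈ [0,1] be a value attained by F_X (i.e., x ∈ range F_X). Then P(F_X(X) ≤ x) = x. -/
/-!
Let `G t = ℙ(X ≤ t) = ofReal (F t)`, a monotone continuous function. Since `x ≥ 0`, the event
`F (X) ≤ x` is `X ∈ {t | G t ≤ x}`, a closed downward closed set. Either it is a half-line `Iic s`,
where monotonicity and continuity force `G s = x`, or it is all of `ℝ`, and then `G ≤ x` everywhere
while `G t → 1` as `t → ∞`, so `x = 1`.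
-/

open Set Filter Topology MeasureTheory ProbabilityTheory

theorem setOf_le_eq_univ_or_exists_Iic {α β : Type*} [ConditionallyCompleteLinearOrder α]
    [TopologicalSpace α] [OrderTopology α] [LinearOrder β] [TopologicalSpace β]
    [OrderClosedTopology β] {g : α → β} (hmono : Monotone g) (hcont : Continuous g) (t₀ : α) :
    {t | g t ≤ g t₀} = univ ∨ ∃ s, {t | g t ≤ g t₀} = Iic s ∧ g s = g t₀ := by
  set S := {t | g t ≤ g t₀}
  have ht₀ : t₀ ∈ S := le_refl (g t₀)
  by_cases hbdd : BddAbove S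
  · have hs : sSup S ∈ S := (isClosed_le hcont continuous_const).csSup_mem ⟨t₀, ht₀⟩ hbdd
    refine .inr ⟨sSup S, ?_, le_antisymm hs (hmono (le_csSup hbdd ht₀))⟩
    ext t
    exact ⟨fun ht => le_csSup hbdd ht, fun ht => (hmono ht).trans hs⟩
  · refine .inl (eq_univ_of_forall fun t => ?_)
    obtain ⟨u, hu, htu⟩ := not_bddAbove_iff.mp hbdd t
    exact (hmono htu.le).trans hu

theorem tendsto_measure_setOf_le_atTop {Ω : Type*} [MeasurableSpace Ω] (μ : Measure Ω)
    (X : Ω → ℝ) : Tendsto (fun t => μ {ω | X ω ≤ t}) atTop (𝓝 (μ univ)) := by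
  have hmono : Monotone fun t : ℝ => {ω | X ω ≤ t} :=
    fun _ _ hts _ hω => le_trans hω hts
  have hcover : ⋃ t : ℝ, {ω | X ω ≤ t} = univ :=
    eq_univ_of_forall fun ω => mem_iUnion.mpr ⟨X ω, le_refl (X ω)⟩
  rw [← hcover]
  exact tendsto_measure_iUnion_atTop hmono

theorem cdf_transform_at_attained_general {Ω : Type*} [MeasureSpace Ω]
    [IsProbabilityMeasure (ℙ : Measure Ω)]
    (X : Ω → ℝ)
    (F : ℝ → ℝ) (hF : ∀ t, ℙ {ω | X ω ≤ t} = ENNReal.ofReal (F t))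
    (hcont : Continuous F)
    (x : ℝ) (hx : x ∈ Icc (0 : ℝ) 1) (hxr : x ∈ Set.range F) :
    ℙ {ω | F (X ω) ≤ x} = ENNReal.ofReal x := by
  obtain ⟨t₀, rfl⟩ := hxr
  set g : ℝ → ENNReal := fun t => ℙ {ω | X ω ≤ t}
  have hg_mono : Monotone g := fun t s hts => measure_mono fun ω hω => le_trans hω hts
  have hg_cont : Continuous g :=
    (ENNReal.continuous_ofReal.comp hcont).congr fun t => (hF t).symm
  have hevent : {ω | F (X ω) ≤ F t₀} = X ⁻¹' {t | g t ≤ g t₀} := by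
    ext ω
    change F (X ω) ≤ F t₀ ↔ g (X ω) ≤ g t₀
    simp only [g, hF, ENNReal.ofReal_le_ofReal_iff hx.1]
  rw [hevent, ← hF t₀]
  rcases setOf_le_eq_univ_or_exists_Iic hg_mono hg_cont t₀ with hall | ⟨s, hIic, hs⟩
  · have hone : g t₀ = 1 := by
      have hlim : Tendsto g atTop (𝓝 1) := by
        simpa only [measure_univ] using tendsto_measure_setOf_le_atTop ℙ X
      exact le_antisymm prob_le_one
        (le_of_tendsto' hlim fun t => (Set.ext_iff.mp hall t).mpr (mem_univ t))
    rw [hall, preimage_univ, measure_univ]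
    exact hone.symm
  · rw [hIic]
    exact hs

/-- if `F` is the continuous CDF of `X` and `x ∈ [0,1]` is attained by `F`,
then `P(F(X) ≤ x) = x`. -/
theorem cdf_transform_at_attained {Ω : Type*} [MeasureSpace Ω]
    [IsProbabilityMeasure (ℙ : Measure Ω)]
    (X : Ω → ℝ) (hX : Measurable X)
    (F : ℝ → ℝ) (hF : ∀ t, ℙ {ω | X ω ≤ t} = ENNReal.ofReal (F t))
    (hcont : Continuous F)
    (x : ℝ) (hx : x ∈ Icc (0 : ℝ) 1) (hxr : x ∈ Set.range F) :
    ℙ {ω | F (X ω) ≤ x} = ENNReal.ofReal x :=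
  cdf_transform_at_attained_general X F hF hcont x hx hxr
end

section
/- Let X be a real random variable with CDF F_X, and suppose x ∈ [0,1) is not attained by F_X but lies strictly between F_X(z^-) and F_X(z) for some jump point z (so x^+ := F_X(F_X^{-1}(x)) > x). Then P(F_X(X) ≤ x) = P(F_X(X) < x^+) = P(X < z), i.e., the CDF of F_X(X) at x equals the left limit of F_X at the jump point z = F_X^{-1}(x). -/
open Set Filter Topology MeasureTheory ProbabilityTheory

/-! A jump of `F` at `z` that straddles `x` splits the line exactly at `z`: below `z` the values
of `F` stay at most `F(z⁻) ≤ x`, from `z` on they are at least `F z > x`. Hence `F(X) ≤ x`,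
`F(X) < F z` and `X < z` are the same event, whose probability is `F(z⁻)` by continuity of the
measure from below. -/

namespace Monotone

variable {α β : Type*} [LinearOrder α] [ConditionallyCompleteLinearOrder β] [TopologicalSpace β]
  [OrderTopology β] {F : α → β} {x : β} {z : α}

theorem le_iff_lt_of_leftLim_le_of_lt (hF : Monotone F) (hleft : Function.leftLim F z ≤ x)
    (hright : x < F z) (a : α) : F a ≤ x ↔ a < z :=
  ⟨fun ha => lt_of_not_ge fun hza => (hright.trans_le (hF hza)).not_ge ha,
    fun ha => (hF.le_leftLim ha).trans hleft⟩

theorem lt_iff_lt_of_leftLim_lt (hF : Monotone F) (hjump : Function.leftLim F z < F z) (a : α) :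
    F a < F z ↔ a < z :=
  ⟨hF.reflect_lt, fun ha => (hF.le_leftLim ha).trans_lt hjump⟩

end Monotone

theorem measure_lt_eq_ofReal_leftLim {Ω : Type*} [MeasurableSpace Ω] (μ : Measure Ω)
    (X : Ω → ℝ) {F : ℝ → ℝ} (hmono : Monotone F)
    (hF : ∀ t, μ {ω | X ω ≤ t} = ENNReal.ofReal (F t)) (z : ℝ) :
    μ {ω | X ω < z} = ENNReal.ofReal (Function.leftLim F z) := by
  obtain ⟨u, hu_mono, hu_mem, hu_lim⟩ := exists_seq_strictMono_tendsto' (sub_one_lt z)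
  have hu_lt : Tendsto u atTop (𝓝[<] z) :=
    tendsto_nhdsWithin_iff.2 ⟨hu_lim, Eventually.of_forall fun n => (hu_mem n).2⟩
  have hunion : {ω | X ω < z} = ⋃ n, {ω | X ω ≤ u n} := by
    ext ω
    simp only [mem_ofPred_eq, mem_iUnion]
    refine ⟨fun h => ?_, fun ⟨n, hn⟩ => hn.trans_lt (hu_mem n).2⟩
    obtain ⟨n, hn⟩ := (hu_lim.eventually (lt_mem_nhds h)).exists
    exact ⟨n, hn.le⟩
  have hmeasure : Tendsto (fun n => μ {ω | X ω ≤ u n}) atTop (𝓝 (μ {ω | X ω < z})) :=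
    hunion ▸ tendsto_measure_iUnion_atTop fun m n hmn ω hω =>
      (show X ω ≤ u m from hω).trans (hu_mono.monotone hmn)
  have hcdf : Tendsto (fun n => μ {ω | X ω ≤ u n}) atTop
      (𝓝 (ENNReal.ofReal (Function.leftLim F z))) := by
    simp only [hF]
    exact (ENNReal.continuous_ofReal.tendsto _).comp ((hmono.tendsto_leftLim z).comp hu_lt)
  exact tendsto_nhds_unique hmeasure hcdf

theorem cdf_transform_at_jump_general {Ω : Type*} [MeasureSpace Ω]
    (X : Ω → ℝ)
    (F : ℝ → ℝ) (hF : ∀ t, ℙ {ω | X ω ≤ t} = ENNReal.ofReal (F t))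
    (hmono : Monotone F)
    (x : ℝ) (z : ℝ)
    (hjump : Function.leftLim F z ≤ x ∧ x < F z) :
    ℙ {ω | F (X ω) ≤ x} = ℙ {ω | F (X ω) < F z} ∧
    ℙ {ω | F (X ω) ≤ x} = ℙ {ω | X ω < z} ∧
    ℙ {ω | X ω < z} = ENNReal.ofReal (Function.leftLim F z) := by
  obtain ⟨hleft, hright⟩ := hjump
  have hle : ∀ ω, F (X ω) ≤ x ↔ X ω < z := fun ω =>
    hmono.le_iff_lt_of_leftLim_le_of_lt hleft hright (X ω)
  have hlt : ∀ ω, F (X ω) < F z ↔ X ω < z := fun ω =>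
    hmono.lt_iff_lt_of_leftLim_lt (hleft.trans_lt hright) (X ω)
  simp only [hle, hlt, true_and]
  exact measure_lt_eq_ofReal_leftLim ℙ X hmono hF z

/-- if `x ∈ [0,1)` is not attained by the CDF `F` of `X` and lies in the jump
of `F` at `z = F⁻¹(x)` (i.e. `F(z⁻) ≤ x < F(z)`), then
`P(F(X) ≤ x) = P(F(X) < x⁺) = P(X < z)`, and this equals the left limit of `F` at `z`. -/
theorem cdf_transform_at_jump {Ω : Type*} [MeasureSpace Ω]
    [IsProbabilityMeasure (ℙ : Measure Ω)]
    (X : Ω → ℝ) (hX : Measurable X)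
    (F : ℝ → ℝ) (hF : ∀ t, ℙ {ω | X ω ≤ t} = ENNReal.ofReal (F t))
    (hmono : Monotone F) (hrc : ∀ t, ContinuousWithinAt F (Ici t) t)
    (x : ℝ) (hx : x ∈ Ico (0 : ℝ) 1) (hxr : x ∉ Set.range F)
    (z : ℝ) (hz : z = sInf {w | x ≤ F w})
    (hjump : Function.leftLim F z ≤ x ∧ x < F z) :
    ℙ {ω | F (X ω) ≤ x} = ℙ {ω | F (X ω) < F z} ∧
    ℙ {ω | F (X ω) ≤ x} = ℙ {ω | X ω < z} ∧
    ℙ {ω | X ω < z} = ENNReal.ofReal (Function.leftLim F z) :=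
  cdf_transform_at_jump_general X F hF hmono x z hjump
end
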